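/- The complete bipartite graph K_{2,3} with colour classes {a, b, c} and {d, v} contains an (ab,cd)-linkage, an (ac,bd)-linkage, and an (ad,bc)-linkage, but contains no K_4-minor rooted at a, b, c, d. -/

import Mathlib

open SimpleGraph

variable {V : Type*}

/-- Branch-set definition of an `H`-minor in `G`. -/
def HasGraphMinor {W : Type*} (G : SimpleGraph V) (H : SimpleGraph W) : Prop :=
  ∃ B : W → Set V,
    (∀ w, (B w).Nonempty) ∧
    (∀ w, (G.induce (B w)).Connected) ∧
    (Pairwise fun w w' => Disjoint (B w) (B w')) ∧
    ∀ ⦃w w'⦄, H.Adj w w' → ∃ x ∈ B w, ∃ y ∈ B w', G.Adj x y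

/-- `A,B,C,D` are the branch sets of a `K₄`-minor rooted at `a,b,c,d`. -/
def RootedK4MinorOn (G : SimpleGraph V) (a b c d : V) (A B C D : Set V) : Prop :=
    a ∈ A ∧ b ∈ B ∧ c ∈ C ∧ d ∈ D ∧
    (G.induce A).Connected ∧ (G.induce B).Connected ∧
    (G.induce C).Connected ∧ (G.induce D).Connected ∧
    Disjoint A B ∧ Disjoint A C ∧ Disjoint A D ∧
    Disjoint B C ∧ Disjoint B D ∧ Disjoint C D ∧
    (∃ x ∈ A, ∃ y ∈ B, G.Adj x y) ∧ (∃ x ∈ A, ∃ y ∈ C, G.Adj x y) ∧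
    (∃ x ∈ A, ∃ y ∈ D, G.Adj x y) ∧ (∃ x ∈ B, ∃ y ∈ C, G.Adj x y) ∧
    (∃ x ∈ B, ∃ y ∈ D, G.Adj x y) ∧ (∃ x ∈ C, ∃ y ∈ D, G.Adj x y)

/-- A `K₄`-minor rooted at `a,b,c,d`. -/
def RootedK4Minor (G : SimpleGraph V) (a b c d : V) : Prop :=
  ∃ A B C D : Set V, RootedK4MinorOn G a b c d A B C D

/-- A `K₃`-minor rooted at `a,b,c`. -/
def RootedK3Minor (G : SimpleGraph V) (a b c : V) : Prop :=
  ∃ A B C : Set V,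
    a ∈ A ∧ b ∈ B ∧ c ∈ C ∧
    (G.induce A).Connected ∧ (G.induce B).Connected ∧ (G.induce C).Connected ∧
    Disjoint A B ∧ Disjoint A C ∧ Disjoint B C ∧
    (∃ x ∈ A, ∃ y ∈ B, G.Adj x y) ∧ (∃ x ∈ A, ∃ y ∈ C, G.Adj x y) ∧
    (∃ x ∈ B, ∃ y ∈ C, G.Adj x y)

/-- Add a new apex vertex adjacent to every vertex of `s`. -/
def Apex (G : SimpleGraph V) (s : Set V) : SimpleGraph (Option V) where
  Adj x y :=
    (∃ u v, x = some u ∧ y = some v ∧ G.Adj u v) ∨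
    (∃ u, x = some u ∧ y = none ∧ u ∈ s) ∨
    (∃ v, x = none ∧ y = some v ∧ v ∈ s)
  symm := by
    refine ⟨?_⟩
    rintro x y (⟨u, v, rfl, rfl, h⟩ | ⟨u, rfl, rfl, h⟩ | ⟨v, rfl, rfl, h⟩)
    · exact Or.inl ⟨v, u, rfl, rfl, h.symm⟩
    · exact Or.inr (Or.inr ⟨u, rfl, rfl, h⟩)
    · exact Or.inr (Or.inl ⟨v, rfl, rfl, h⟩)
  loopless := by
    refine ⟨?_⟩
    rintro x (⟨u, v, rfl, h, hadj⟩ | ⟨u, rfl, h, _⟩ | ⟨v, h, rfl, _⟩)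
    · rw [Option.some_inj] at h; subst h; exact hadj.ne rfl
    · cases h
    · cases h

/-- Planarity, via Wagner's theorem: no `K₅`-minor and no `K₃,₃`-minor. -/
def IsPlanar (G : SimpleGraph V) : Prop :=
  ¬ HasGraphMinor G (⊤ : SimpleGraph (Fin 5)) ∧
  ¬ HasGraphMinor G (completeBipartiteGraph (Fin 3) (Fin 3))

/-- `G` is `k`-connected: more than `k` vertices, and deleting fewer than `k`
vertices leaves a connected graph. -/
def KConnected (k : ℕ) (G : SimpleGraph V) : Prop :=
  k < Nat.card V ∧ ∀ S : Set V, S.Finite → S.ncard < k → (G.induce Sᶜ).Connected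

/-- An `(s₁t₁,s₂t₂)`-linkage: an `s₁t₁`-path and an `s₂t₂`-path that are disjoint. -/
def Linkage (G : SimpleGraph V) (s₁ t₁ s₂ t₂ : V) : Prop :=
  ∃ (P : G.Walk s₁ t₁) (Q : G.Walk s₂ t₂),
    P.IsPath ∧ Q.IsPath ∧ P.support.Disjoint Q.support

/-- `G` is obtained from its induced subgraph on `S` by attaching, to each triangle,
a (possibly empty) clique: `t x` records the triangle of the clique containing `x ∉ S`. -/
def CliqueExpansion (G : SimpleGraph V) (S : Set V) (t : V → Finset V) : Prop :=
  ∀ x ∉ S, ↑(t x) ⊆ S ∧ (t x).card = 3 ∧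
    (∀ y ∈ t x, ∀ z ∈ t x, y ≠ z → G.Adj y z) ∧
    (∀ y, G.Adj x y ↔ (y ∈ t x ∨ (y ∉ S ∧ y ≠ x ∧ t y = t x)))

/-- `H` is a planar graph with outerface cycle `(p,q,r,s)`, every internal face a
triangle, and every triangle a face.  (Combinatorial surrogate: `p,q,r,s` bound a
common face — witnessed by planarity of the graph with an apex added adjacent to
them — the edge count of a near-triangulation of a quadrilateral, and no
separating triangle.) -/
def IsQuadTriangulation {U : Type*} (H : SimpleGraph U) (p q r s : U) : Prop :=
  p ≠ q ∧ p ≠ r ∧ p ≠ s ∧ q ≠ r ∧ q ≠ s ∧ r ≠ s ∧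
  H.Adj p q ∧ H.Adj q r ∧ H.Adj r s ∧ H.Adj s p ∧
  IsPlanar H ∧ IsPlanar (Apex H {p, q, r, s}) ∧
  H.edgeSet.ncard + 7 = 3 * Nat.card U ∧
  ∀ T : Finset U, T.card = 3 → (∀ x ∈ T, ∀ y ∈ T, x ≠ y → H.Adj x y) →
    (((↑T)ᶜ : Set U) = ∅ ∨ (H.induce (↑T)ᶜ).Connected)

/-- `W` is an `(a,b,c,d)`-web. -/
def IsWeb (W : SimpleGraph V) (a b c d : V) : Prop :=
  ∃ (S : Set V) (ha : a ∈ S) (hb : b ∈ S) (hc : c ∈ S) (hd : d ∈ S),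
    IsQuadTriangulation (W.induce S) ⟨a, ha⟩ ⟨b, hb⟩ ⟨c, hc⟩ ⟨d, hd⟩ ∧
    ∃ t, CliqueExpansion W S t

/-- `W` is an `{a,b,c,d}`-web, i.e. an `(a',b',c',d')`-web for some ordering. -/
def IsUnorderedWeb (W : SimpleGraph V) (a b c d : V) : Prop :=
  ∃ p q r s : V, ({p, q, r, s} : Set V) = {a, b, c, d} ∧ IsWeb W p q r s

/-- A separation `(A, B)` of `G` (given by the vertex sets of the two sides). -/
def IsSeparation (G : SimpleGraph V) (A B : Set V) : Prop :=
  A ∪ B = Set.univ ∧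
  (∀ ⦃x y⦄, G.Adj x y → (x ∈ A ∧ y ∈ A) ∨ (x ∈ B ∧ y ∈ B)) ∧
  (A \ B).Nonempty ∧ (B \ A).Nonempty


theorem Linkage.symm {G : SimpleGraph V} {s₁ t₁ s₂ t₂ : V} (h : Linkage G s₁ t₁ s₂ t₂) :
    Linkage G s₂ t₂ s₁ t₁ :=
  let ⟨P, Q, hP, hQ, hPQ⟩ := h
  ⟨Q, P, hQ, hP, hPQ.symm⟩

namespace SimpleGraph.completeBipartiteGraph

variable {α β : Type*}

theorem adj_inl_inr (i : α) (j : β) :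
    (completeBipartiteGraph α β).Adj (Sum.inl i) (Sum.inr j) := by
  simp [completeBipartiteGraph]

/-- The linkage `i – j' – k` together with the edge `l – j`. -/
theorem linkage {i k l : α} {j j' : β} (hik : i ≠ k) (hil : i ≠ l) (hkl : k ≠ l)
    (hj : j ≠ j') :
    Linkage (completeBipartiteGraph α β) (Sum.inl i) (Sum.inl k) (Sum.inl l) (Sum.inr j) := by
  refine ⟨.cons (adj_inl_inr i j') (.cons (adj_inl_inr k j').symm .nil),
    .cons (adj_inl_inr l j) .nil, ?_, ?_, ?_⟩ <;>
  simp [Walk.isPath_def, List.Disjoint, hik, hil, hkl, hj.symm]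

theorem exists_inr_mem_of_adj {X Y : Set (α ⊕ β)}
    (h : ∃ x ∈ X, ∃ y ∈ Y, (completeBipartiteGraph α β).Adj x y) :
    (∃ j, Sum.inr j ∈ X) ∨ ∃ j, Sum.inr j ∈ Y := by
  obtain ⟨x, hx, y, hy, hxy⟩ := h
  rcases x with i | j <;> rcases y with k | l
  · simp [completeBipartiteGraph] at hxy
  · exact .inr ⟨l, hy⟩
  · exact .inl ⟨j, hx⟩
  · simp [completeBipartiteGraph] at hxy

theorem inr_mem_of_adj {d v : β} (hβ : ∀ j, j = d ∨ j = v) {X Y : Set (α ⊕ β)}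
    (hX : Sum.inr d ∉ X) (hY : Sum.inr d ∉ Y)
    (h : ∃ x ∈ X, ∃ y ∈ Y, (completeBipartiteGraph α β).Adj x y) :
    Sum.inr v ∈ X ∨ Sum.inr v ∈ Y := by
  have hv : ∀ Z : Set (α ⊕ β), Sum.inr d ∉ Z → (∃ j, Sum.inr j ∈ Z) → Sum.inr v ∈ Z := by
    rintro Z hZ ⟨j, hj⟩
    rcases hβ j with rfl | rfl
    exacts [absurd hj hZ, hj]
  exact (exists_inr_mem_of_adj h).imp (hv X hX) (hv Y hY)

/-- The branch sets of the three roots other than `d` are pairwise adjacent, so every pair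
of them contains the single remaining right vertex `v`, which lies in only one of them. -/
theorem not_rootedK4Minor {d v : β} (hβ : ∀ j, j = d ∨ j = v) (a b c : α ⊕ β) :
    ¬ RootedK4Minor (completeBipartiteGraph α β) a b c (Sum.inr d) := by
  rintro ⟨A, B, C, D, -, -, -, hD, -, -, -, -, hAB, hAC, hAD, hBC, hBD, hCD,
    eAB, eAC, -, eBC, -, -⟩
  have hdA : Sum.inr d ∉ A := fun h => hAD.notMem_of_mem_left h hD
  have hdB : Sum.inr d ∉ B := fun h => hBD.notMem_of_mem_left h hD
  have hdC : Sum.inr d ∉ C := fun h => hCD.notMem_of_mem_left h hD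
  by_cases hvA : Sum.inr v ∈ A
  · rcases inr_mem_of_adj hβ hdB hdC eBC with hvB | hvC
    exacts [hAB.notMem_of_mem_left hvA hvB, hAC.notMem_of_mem_left hvA hvC]
  · have hvB := (inr_mem_of_adj hβ hdA hdB eAB).resolve_left hvA
    have hvC := (inr_mem_of_adj hβ hdA hdC eAC).resolve_left hvA
    exact hBC.notMem_of_mem_left hvB hvC

end SimpleGraph.completeBipartiteGraph

/-- `K_{2,3}` with colour classes `{a,b,c}` and `{d,v}` has all
three linkages but no `K₄`-minor rooted at `a,b,c,d`. -/
theorem K23_linkages_no_rooted_K4_minor :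
    Linkage (completeBipartiteGraph (Fin 3) (Fin 2))
        (Sum.inl 0) (Sum.inl 1) (Sum.inl 2) (Sum.inr 0) ∧
    Linkage (completeBipartiteGraph (Fin 3) (Fin 2))
        (Sum.inl 0) (Sum.inl 2) (Sum.inl 1) (Sum.inr 0) ∧
    Linkage (completeBipartiteGraph (Fin 3) (Fin 2))
        (Sum.inl 0) (Sum.inr 0) (Sum.inl 1) (Sum.inl 2) ∧
    ¬ RootedK4Minor (completeBipartiteGraph (Fin 3) (Fin 2))
        (Sum.inl 0) (Sum.inl 1) (Sum.inl 2) (Sum.inr 0) :=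
  ⟨completeBipartiteGraph.linkage (by decide) (by decide) (by decide) (j' := 1) (by decide),
    completeBipartiteGraph.linkage (by decide) (by decide) (by decide) (j' := 1) (by decide),
    (completeBipartiteGraph.linkage (by decide) (by decide) (by decide) (j' := 1) (by decide)).symm,
    completeBipartiteGraph.not_rootedK4Minor (v := 1) (by decide) _ _ _⟩
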